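/- If R is an r×r symmetric positive definite matrix with eigenvalue decomposition R = U Σ Uᵀ, and X is an r×(n·r) real matrix of full row rank, and the matrix R' := X (R ⊗ I_n) Xᵀ is invertible, then R⁻¹ − Xᵀ R'⁻¹ X is positive semidefinite. -/

import Mathlib

/-!
With `M = R ⊗ I_n` (positive definite) and `A = Xᵀ (X M Xᵀ)⁻¹ X` one has `A M A = A`, hence
`M⁻¹ - A = (M⁻¹ - A)ᵀ M (M⁻¹ - A)`, a congruence of a positive semidefinite matrix.
-/

open Matrix Kronecker

namespace Matrix

variable {m n R : Type*} [Fintype m] [DecidableEq m] [Fintype n] [DecidableEq n]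
  [CommRing R] [PartialOrder R] [StarRing R]

theorem PosSemidef.inv_sub_conjTranspose_mul_inv_mul {M : Matrix n n R} (hM : M.PosSemidef)
    (hMdet : IsUnit M.det) (X : Matrix m n R) (hXMX : IsUnit (X * M * Xᴴ).det) :
    (M⁻¹ - Xᴴ * (X * M * Xᴴ)⁻¹ * X).PosSemidef := by
  set A := Xᴴ * (X * M * Xᴴ)⁻¹ * X with hA_def
  have hA : A * M * A = A := by
    calc A * M * A = Xᴴ * ((X * M * Xᴴ)⁻¹ * (X * M * Xᴴ)) * (X * M * Xᴴ)⁻¹ * X := by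
          simp only [hA_def, Matrix.mul_assoc]
      _ = A := by rw [nonsing_inv_mul _ hXMX, Matrix.mul_one]
  have hA_herm : Aᴴ = A := by
    simp only [hA_def, conjTranspose_mul, conjTranspose_conjTranspose, conjTranspose_nonsing_inv,
      hM.1.eq, Matrix.mul_assoc]
  have hcongr : (M⁻¹ - A)ᴴ * M * (M⁻¹ - A) = M⁻¹ - A := by
    rw [conjTranspose_sub, conjTranspose_nonsing_inv, hM.1.eq, hA_herm]
    simp only [Matrix.sub_mul, Matrix.mul_sub, nonsing_inv_mul _ hMdet,
      mul_nonsing_inv _ hMdet, Matrix.one_mul, Matrix.mul_one, hA, Matrix.mul_assoc, sub_self,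
      sub_zero]
  exact hcongr ▸ hM.conjTranspose_mul_mul_same _

end Matrix

theorem inv_sub_congr_psd_general {r n : ℕ}
    (R : Matrix (Fin r) (Fin r) ℝ)
    (hRpd : R.PosDef)
    (X : Matrix (Fin r) (Fin r × Fin n) ℝ)
    (R' : Matrix (Fin r) (Fin r) ℝ)
    (hR' : R' = X * (R ⊗ₖ (1 : Matrix (Fin n) (Fin n) ℝ)) * Xᵀ)
    (hinv : IsUnit R'.det) :
    ((R⁻¹ ⊗ₖ (1 : Matrix (Fin n) (Fin n) ℝ)) - Xᵀ * R'⁻¹ * X).PosSemidef := by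
  have hM : (R ⊗ₖ (1 : Matrix (Fin n) (Fin n) ℝ)).PosDef := hRpd.kronecker PosDef.one
  rw [← conjTranspose_eq_transpose_of_trivial] at hR' ⊢
  subst hR'
  rw [show R⁻¹ ⊗ₖ (1 : Matrix (Fin n) (Fin n) ℝ) = (R ⊗ₖ 1)⁻¹ by
    rw [inv_kronecker, inv_one]]
  exact hM.posSemidef.inv_sub_conjTranspose_mul_inv_mul
    ((isUnit_iff_isUnit_det _).mp hM.isUnit) _ hinv

/-- If `R` is a symmetric positive definite `r × r` matrix with eigenvalue decomposition
`R = U Σ Uᵀ`, `X` is an `r × (n·r)` matrix of full row rank, and `R' = X (R ⊗ I_n) Xᵀ`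
is invertible, then `R⁻¹ ⊗ I_n − Xᵀ R'⁻¹ X` is positive semidefinite. -/
theorem inv_sub_congr_psd {r n : ℕ}
    (R U : Matrix (Fin r) (Fin r) ℝ) (Sig : Fin r → ℝ)
    (hRpd : R.PosDef)
    (hU : Uᵀ * U = 1) (hdecomp : R = U * Matrix.diagonal Sig * Uᵀ)
    (X : Matrix (Fin r) (Fin r × Fin n) ℝ) (hX : X.rank = r)
    (R' : Matrix (Fin r) (Fin r) ℝ)
    (hR' : R' = X * (R ⊗ₖ (1 : Matrix (Fin n) (Fin n) ℝ)) * Xᵀ)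
    (hinv : IsUnit R'.det) :
    ((R⁻¹ ⊗ₖ (1 : Matrix (Fin n) (Fin n) ℝ)) - Xᵀ * R'⁻¹ * X).PosSemidef :=
  inv_sub_congr_psd_general R hRpd X R' hR' hinv
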